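/- Let ν>2 and define τ_ν(x) = x·Φ_ν(x) + √(ν/(ν−2))·φ_{ν−2}(x/√(ν/(ν−2))), where φ_ν is the standard Student-t density with ν degrees of freedom and Φ_ν its cumulative distribution function. Then for all real numbers u ≥ 0, s > 0, σ̃ > 0 and S ≥ 0: σ̃·s·τ_ν((u − S·s)/(σ̃·s)) ≥ (σ̃·τ_ν(−S/σ̃)/(S + σ̃·τ_ν(−S/σ̃)))·u ≥ (τ_ν(−S/σ̃)/τ_ν(S/σ̃))·u. -/

import Mathlib

/-!
Let `T` be Student-t with `ν` degrees of freedom and `c_ν` the normalising constant of `φ_ν`. The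
second summand of `τ_ν` equals `ν/(ν-1)·c_ν·(1 + x²/ν)^(-(ν-1)/2)`, whose derivative is `-x φ_ν(x)`,
so `τ_ν(x) = ∫_{t ≤ x} (x - t) φ_ν(t) dt = 𝔼 (x - T)₊`. Hence `τ_ν` is nonnegative and monotone, and
since `φ_ν` is even with total mass one, `τ_ν(x) = x + τ_ν(-x)`. The mass is computed by writing
`(1 + x²)^(-a)` as a Gamma mixture of Gaussians, `Γ(a)⁻¹ ∫_0^∞ y^(a-1) e^{-(1+x²)y} dy`, and
swapping the integrals.

The first inequality then only uses these three properties of `τ_ν`; the second is an equality,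
by `τ_ν(S/σ̃) = S/σ̃ + τ_ν(-S/σ̃)`.
-/

open MeasureTheory

/-- The standard Student-t density with `ν` degrees of freedom. -/
noncomputable def tpdf (ν x : ℝ) : ℝ :=
  Real.Gamma ((ν + 1) / 2) / (Real.sqrt (ν * Real.pi) * Real.Gamma (ν / 2)) *
    (1 + x ^ 2 / ν) ^ (-((ν + 1) / 2))

/-- The cumulative distribution function of the standard Student-t distribution
with `ν` degrees of freedom. -/
noncomputable def tcdf (ν x : ℝ) : ℝ := ∫ t in Set.Iic x, tpdf ν t

/-- `τ_ν(x) = x·Φ_ν(x) + √(ν/(ν−2))·φ_{ν−2}(x/√(ν/(ν−2)))`. -/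
noncomputable def tau (ν x : ℝ) : ℝ :=
  x * tcdf ν x +
    Real.sqrt (ν / (ν - 2)) * tpdf (ν - 2) (x / Real.sqrt (ν / (ν - 2)))

open Real Set Filter

lemma exp_neg_one_add_sq_mul (x y : ℝ) :
    exp (-((1 + x ^ 2) * y)) = exp (-y) * exp (-y * x ^ 2) := by
  rw [← exp_add]; ring_nf

lemma integrable_rpow_mul_exp_neg_one_add_sq_mul (a : ℝ) {y : ℝ} (hy : 0 < y) :
    Integrable fun x : ℝ => y ^ (a - 1) * exp (-((1 + x ^ 2) * y)) := by
  simp_rw [exp_neg_one_add_sq_mul, ← mul_assoc]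
  exact (integrable_exp_neg_mul_sq hy).const_mul _

lemma integral_rpow_mul_exp_neg_one_add_sq_mul (a : ℝ) {y : ℝ} (hy : 0 < y) :
    ∫ x : ℝ, y ^ (a - 1) * exp (-((1 + x ^ 2) * y)) =
      √π * (exp (-y) * y ^ (a - 1 / 2 - 1)) := by
  have hpow : y ^ (a - 1) / √y = y ^ (a - 1 / 2 - 1) := by
    rw [sqrt_eq_rpow, ← rpow_sub hy]; ring_nf
  simp_rw [exp_neg_one_add_sq_mul, ← mul_assoc]
  rw [integral_const_mul, integral_gaussian, sqrt_div' _ hy.le, ← hpow]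
  ring

lemma integrable_prod_rpow_mul_exp_neg_one_add_sq_mul {a : ℝ} (ha : 1 / 2 < a) :
    Integrable (fun p : ℝ × ℝ => p.1 ^ (a - 1) * exp (-((1 + p.2 ^ 2) * p.1)))
      ((volume.restrict (Ioi 0)).prod volume) := by
  refine (integrable_prod_iff (by fun_prop)).2 ⟨?_, ?_⟩
  · filter_upwards [ae_restrict_mem measurableSet_Ioi] with y hy
    exact integrable_rpow_mul_exp_neg_one_add_sq_mul a hy
  · refine ((GammaIntegral_convergent (by linarith : 0 < a - 1 / 2)).const_mul √π).congr ?_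
    filter_upwards [ae_restrict_mem measurableSet_Ioi] with y (hy : 0 < y)
    have hnonneg (x : ℝ) : 0 ≤ y ^ (a - 1) * exp (-((1 + x ^ 2) * y)) := by positivity
    simp_rw [norm_of_nonneg (hnonneg _)]
    exact (integral_rpow_mul_exp_neg_one_add_sq_mul a hy).symm

theorem integral_one_add_sq_rpow_neg {a : ℝ} (ha : 1 / 2 < a) :
    ∫ x : ℝ, (1 + x ^ 2) ^ (-a) = √π * Gamma (a - 1 / 2) / Gamma a := by
  have hΓ : 0 < Gamma a := Gamma_pos_of_pos (by linarith)
  have hslice : ∀ x : ℝ, ∫ y in Ioi (0 : ℝ), y ^ (a - 1) * exp (-((1 + x ^ 2) * y)) =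
      (1 + x ^ 2) ^ (-a) * Gamma a := fun x => by
    rw [integral_rpow_mul_exp_neg_mul_Ioi (by linarith) (by positivity), one_div,
      inv_rpow (by positivity), rpow_neg (by positivity)]
  calc ∫ x : ℝ, (1 + x ^ 2) ^ (-a)
      = (∫ x : ℝ, ∫ y in Ioi (0 : ℝ), y ^ (a - 1) * exp (-((1 + x ^ 2) * y))) / Gamma a := by
        simp_rw [hslice, integral_mul_const]; field_simp
    _ = (∫ y in Ioi (0 : ℝ), ∫ x : ℝ, y ^ (a - 1) * exp (-((1 + x ^ 2) * y))) / Gamma a := by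
        rw [integral_integral_swap (f := fun y x => y ^ (a - 1) * exp (-((1 + x ^ 2) * y)))
          (integrable_prod_rpow_mul_exp_neg_one_add_sq_mul ha)]
    _ = (∫ y in Ioi (0 : ℝ), √π * (exp (-y) * y ^ (a - 1 / 2 - 1))) / Gamma a := by
        rw [setIntegral_congr_fun measurableSet_Ioi
          fun y hy => integral_rpow_mul_exp_neg_one_add_sq_mul a hy]
    _ = √π * Gamma (a - 1 / 2) / Gamma a := by
        rw [integral_const_mul, ← Gamma_eq_integral (by linarith)]

lemma integrable_one_add_sq_rpow_neg {a : ℝ} (ha : 1 / 2 < a) :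
    Integrable fun x : ℝ => (1 + x ^ 2) ^ (-a) := by
  have h := integrable_rpow_neg_one_add_norm_sq (E := ℝ) (μ := volume) (r := 2 * a)
    (by simp; linarith)
  simp only [norm_eq_abs, sq_abs] at h
  convert h using 3
  ring

lemma integrable_mul_one_add_sq_rpow_neg {a : ℝ} (ha : 1 < a) :
    Integrable fun x : ℝ => x * (1 + x ^ 2) ^ (-a) := by
  refine (integrable_one_add_sq_rpow_neg (a := a - 1 / 2) (by linarith)).mono'
    (by fun_prop) (Eventually.of_forall fun x => ?_)
  have hpos : 0 < 1 + x ^ 2 := by positivity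
  have habs : |x| ≤ (1 + x ^ 2) ^ (1 / 2 : ℝ) := by
    rw [← sqrt_eq_rpow, ← sqrt_sq_eq_abs]
    exact sqrt_le_sqrt (by linarith)
  calc ‖x * (1 + x ^ 2) ^ (-a)‖ = |x| * (1 + x ^ 2) ^ (-a) := by
        rw [norm_mul, norm_eq_abs, norm_of_nonneg (by positivity)]
    _ ≤ (1 + x ^ 2) ^ (1 / 2 : ℝ) * (1 + x ^ 2) ^ (-a) := by gcongr
    _ = (1 + x ^ 2) ^ (-(a - 1 / 2)) := by rw [← rpow_add hpos]; ring_nf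

noncomputable def tpdfConst (ν : ℝ) : ℝ :=
  Gamma ((ν + 1) / 2) / (√(ν * π) * Gamma (ν / 2))

lemma tpdfConst_pos {ν : ℝ} (hν : 0 < ν) : 0 < tpdfConst ν := by
  unfold tpdfConst
  have := Gamma_pos_of_pos (by linarith : 0 < (ν + 1) / 2)
  have := Gamma_pos_of_pos (by linarith : 0 < ν / 2)
  positivity

lemma tpdf_eq_tpdfConst_mul (ν x : ℝ) :
    tpdf ν x = tpdfConst ν * (1 + x ^ 2 / ν) ^ (-((ν + 1) / 2)) := rfl

lemma tpdf_eq_tpdfConst_mul_div_sqrt {ν : ℝ} (hν : 0 < ν) (x : ℝ) :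
    tpdf ν x = tpdfConst ν * (1 + (x / √ν) ^ 2) ^ (-((ν + 1) / 2)) := by
  rw [tpdf_eq_tpdfConst_mul, div_pow, sq_sqrt hν.le]

lemma tpdf_nonneg {ν : ℝ} (hν : 0 < ν) (x : ℝ) : 0 ≤ tpdf ν x := by
  have := tpdfConst_pos hν
  rw [tpdf_eq_tpdfConst_mul]
  positivity

lemma tpdf_neg (ν x : ℝ) : tpdf ν (-x) = tpdf ν x := by
  simp [tpdf_eq_tpdfConst_mul]

lemma integrable_tpdf {ν : ℝ} (hν : 0 < ν) : Integrable (tpdf ν) := by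
  simp_rw [funext (tpdf_eq_tpdfConst_mul_div_sqrt hν)]
  exact ((integrable_one_add_sq_rpow_neg (by linarith)).comp_div
    (sqrt_pos.2 hν).ne').const_mul _

lemma integrable_mul_tpdf {ν : ℝ} (hν : 1 < ν) : Integrable fun x => x * tpdf ν x := by
  have hsqrt : √ν ≠ 0 := (sqrt_pos.2 (by linarith)).ne'
  have h := (((integrable_mul_one_add_sq_rpow_neg (a := (ν + 1) / 2) (by linarith)).comp_div
    hsqrt).const_mul (√ν * tpdfConst ν))
  refine h.congr (Eventually.of_forall fun x => ?_)
  simp only [tpdf_eq_tpdfConst_mul_div_sqrt (by linarith : 0 < ν)]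
  field_simp

lemma integral_tpdf {ν : ℝ} (hν : 0 < ν) : ∫ x, tpdf ν x = 1 := by
  have := Gamma_pos_of_pos (by linarith : 0 < (ν + 1) / 2)
  have := Gamma_pos_of_pos (by linarith : 0 < ν / 2)
  simp_rw [tpdf_eq_tpdfConst_mul_div_sqrt hν]
  rw [integral_const_mul, Measure.integral_comp_div (fun y => (1 + y ^ 2) ^ (-((ν + 1) / 2))),
    integral_one_add_sq_rpow_neg (by linarith), smul_eq_mul, abs_of_pos (sqrt_pos.2 hν),
    show (ν + 1) / 2 - 1 / 2 = ν / 2 by ring, tpdfConst, sqrt_mul hν.le]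
  field_simp

lemma tcdf_add_tcdf_neg {ν : ℝ} (hν : 0 < ν) (x : ℝ) : tcdf ν x + tcdf ν (-x) = 1 := by
  have hint := integrable_tpdf hν
  have hreflect : tcdf ν (-x) = ∫ t in Ioi x, tpdf ν t := by
    rw [tcdf, ← integral_comp_neg_Ioi]
    simp_rw [tpdf_neg]
  rw [hreflect, tcdf, intervalIntegral.integral_Iic_add_Ioi hint.integrableOn hint.integrableOn,
    integral_tpdf hν]

lemma hasDerivAt_one_add_sq_div_rpow_neg {ν : ℝ} (hν : 0 < ν) (b x : ℝ) :
    HasDerivAt (fun t : ℝ => (1 + t ^ 2 / ν) ^ (-b))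
      (-(2 * b / ν) * x * (1 + x ^ 2 / ν) ^ (-b - 1)) x := by
  have hinner : HasDerivAt (fun t : ℝ => 1 + t ^ 2 / ν) (2 * x / ν) x := by
    simpa using ((hasDerivAt_pow 2 x).div_const ν).const_add 1
  refine (hinner.rpow_const (p := -b) (Or.inl ?_)).congr_deriv (by ring)
  positivity

lemma tendsto_one_add_sq_div_rpow_neg_atBot {ν b : ℝ} (hν : 0 < ν) (hb : 0 < b) :
    Tendsto (fun t : ℝ => (1 + t ^ 2 / ν) ^ (-b)) atBot (nhds 0) := by
  have hsq : Tendsto (fun t : ℝ => t ^ 2) atBot atTop :=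
    ((tendsto_pow_atTop two_ne_zero).comp tendsto_neg_atBot_atTop).congr neg_sq
  exact (tendsto_rpow_neg_atTop hb).comp
    (tendsto_atTop_add_const_left _ _ (hsq.atTop_div_const hν))

lemma sqrt_mul_tpdf_sub_two {ν : ℝ} (hν : 2 < ν) (x : ℝ) :
    √(ν / (ν - 2)) * tpdf (ν - 2) (x / √(ν / (ν - 2))) =
      ν / (ν - 1) * tpdfConst ν * (1 + x ^ 2 / ν) ^ (-((ν - 1) / 2)) := by
  have h2 : 0 < ν - 2 := by linarith
  have hΓ : 0 < Gamma ((ν - 2) / 2) := Gamma_pos_of_pos (by linarith)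
  have hΓ' : 0 < Gamma ((ν - 1) / 2) := Gamma_pos_of_pos (by linarith)
  have h1 : ν - 1 ≠ 0 := by linarith
  have hΓ1 : Gamma ((ν + 1) / 2) = (ν - 1) / 2 * Gamma ((ν - 1) / 2) := by
    rw [← Gamma_add_one (by linarith)]; ring_nf
  have hΓ2 : Gamma (ν / 2) = (ν - 2) / 2 * Gamma ((ν - 2) / 2) := by
    rw [← Gamma_add_one (by linarith)]; ring_nf
  have hscale : (x / √(ν / (ν - 2))) ^ 2 / (ν - 2) = x ^ 2 / ν := by
    rw [div_pow, sq_sqrt (by positivity)]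
    field_simp
  rw [tpdf_eq_tpdfConst_mul, hscale, tpdfConst, tpdfConst, hΓ1, hΓ2, sqrt_div (by linarith),
    sqrt_mul h2.le, sqrt_mul (by linarith), show ν - 2 + 1 = ν - 1 by ring]
  have := sqrt_pos.2 h2
  have := sqrt_pos.2 (by linarith : 0 < ν)
  have := sqrt_pos.2 pi_pos
  field_simp
  rw [sq_sqrt (by linarith), sq_sqrt h2.le]

lemma hasDerivAt_sqrt_mul_tpdf_sub_two {ν : ℝ} (hν : 2 < ν) (x : ℝ) :
    HasDerivAt (fun t => √(ν / (ν - 2)) * tpdf (ν - 2) (t / √(ν / (ν - 2))))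
      (-(x * tpdf ν x)) x := by
  simp_rw [sqrt_mul_tpdf_sub_two hν]
  refine ((hasDerivAt_one_add_sq_div_rpow_neg (by linarith) ((ν - 1) / 2) x).const_mul
    (ν / (ν - 1) * tpdfConst ν)).congr_deriv ?_
  have : ν - 1 ≠ 0 := by linarith
  rw [tpdf_eq_tpdfConst_mul, show -((ν - 1) / 2) - 1 = -((ν + 1) / 2) by ring]
  field_simp

lemma tendsto_sqrt_mul_tpdf_sub_two_atBot {ν : ℝ} (hν : 2 < ν) :
    Tendsto (fun t => √(ν / (ν - 2)) * tpdf (ν - 2) (t / √(ν / (ν - 2)))) atBot (nhds 0) := by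
  simp_rw [sqrt_mul_tpdf_sub_two hν]
  simpa using (tendsto_one_add_sq_div_rpow_neg_atBot (by linarith) (by linarith)).const_mul
    (ν / (ν - 1) * tpdfConst ν)

lemma tau_eq_integral {ν : ℝ} (hν : 2 < ν) (x : ℝ) :
    tau ν x = ∫ t in Iic x, (x - t) * tpdf ν t := by
  have hint : Integrable fun t => x * tpdf ν t := (integrable_tpdf (by linarith)).const_mul x
  have hint' : Integrable fun t => -(t * tpdf ν t) := (integrable_mul_tpdf (by linarith)).neg
  have hpdf := integral_Iic_of_hasDerivAt_of_tendsto' (a := x)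
    (fun t _ => hasDerivAt_sqrt_mul_tpdf_sub_two hν t) hint'.integrableOn
    (tendsto_sqrt_mul_tpdf_sub_two_atBot hν)
  rw [sub_zero] at hpdf
  rw [tau, tcdf, ← integral_const_mul, ← hpdf,
    ← integral_add hint.integrableOn hint'.integrableOn]
  exact setIntegral_congr_fun measurableSet_Iic fun t _ => by ring

lemma tau_nonneg {ν : ℝ} (hν : 2 < ν) (x : ℝ) : 0 ≤ tau ν x := by
  rw [tau_eq_integral hν]
  exact setIntegral_nonneg measurableSet_Iic fun t (ht : t ≤ x) =>
    mul_nonneg (by linarith) (tpdf_nonneg (by linarith) t)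

lemma tau_monotone {ν : ℝ} (hν : 2 < ν) : Monotone (tau ν) := by
  intro x y hxy
  have hint (c : ℝ) : Integrable fun t => (c - t) * tpdf ν t := by
    simp_rw [sub_mul]
    exact ((integrable_tpdf (by linarith)).const_mul c).sub (integrable_mul_tpdf (by linarith))
  rw [tau_eq_integral hν, tau_eq_integral hν]
  calc ∫ t in Iic x, (x - t) * tpdf ν t ≤ ∫ t in Iic x, (y - t) * tpdf ν t :=
        setIntegral_mono (hint x).integrableOn (hint y).integrableOn fun t =>
          mul_le_mul_of_nonneg_right (by linarith) (tpdf_nonneg (by linarith) t)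
    _ ≤ ∫ t in Iic y, (y - t) * tpdf ν t := by
        refine setIntegral_mono_set (hint y).integrableOn ?_ (Iic_subset_Iic.2 hxy).eventuallyLE
        filter_upwards [ae_restrict_mem measurableSet_Iic] with t (ht : t ≤ y)
        exact mul_nonneg (by linarith) (tpdf_nonneg (by linarith) t)

lemma tau_eq_add_tau_neg {ν : ℝ} (hν : 2 < ν) (x : ℝ) : tau ν x = x + tau ν (-x) := by
  have h := tcdf_add_tcdf_neg (by linarith : 0 < ν) x
  rw [tau, tau, neg_div, tpdf_neg]
  linear_combination x * h

lemma le_tau {ν : ℝ} (hν : 2 < ν) (x : ℝ) : x ≤ tau ν x := by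
  linarith [tau_eq_add_tau_neg hν x, tau_nonneg hν (-x)]

lemma div_mul_le_mul_apply_of_monotone {f : ℝ → ℝ} (hf : Monotone f) (hf0 : ∀ x, 0 ≤ f x)
    (hle : ∀ x, x ≤ f x) {u s σ S : ℝ} (hu : 0 ≤ u) (hs : 0 < s) (hσ : 0 < σ) (hS : 0 ≤ S) :
    σ * f (-S / σ) / (S + σ * f (-S / σ)) * u ≤ σ * s * f ((u - S * s) / (σ * s)) := by
  have hσs : 0 < σ * s := mul_pos hσ hs
  set P := f (-S / σ)
  set z := (u - S * s) / (σ * s)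
  have hz : -S / σ ≤ z := by
    rw [div_le_div_iff₀ hσ hσs]; nlinarith
  have hσsz : σ * s * z = u - S * s := mul_div_cancel₀ _ hσs.ne'
  have hP : 0 ≤ P := hf0 _
  rcases (add_nonneg hS (mul_nonneg hσ.le hP)).eq_or_lt with hD | hD
  · rw [← hD, div_zero, zero_mul]
    exact mul_nonneg hσs.le (hf0 z)
  -- `z ≥ -S/σ` as `u ≥ 0`; the left side is a convex combination of `σ s z` and `σ s P`,
  -- both at most `σ s f z`.
  calc σ * P / (S + σ * P) * u
      = σ * P / (S + σ * P) * (σ * s * z) + S / (S + σ * P) * (σ * s * P) := by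
        rw [hσsz]; field_simp; ring
    _ ≤ σ * P / (S + σ * P) * (σ * s * f z) + S / (S + σ * P) * (σ * s * f z) := by
        gcongr
        exacts [hle z, hf hz]
    _ = σ * s * f z := by field_simp; ring

/-- HEI lower bound: for `ν > 2` and all `u ≥ 0`, `s > 0`,
`σ̃ > 0`, `S ≥ 0`,
`σ̃·s·τ_ν((u − S·s)/(σ̃·s)) ≥ (σ̃·τ_ν(−S/σ̃)/(S + σ̃·τ_ν(−S/σ̃)))·u
  ≥ (τ_ν(−S/σ̃)/τ_ν(S/σ̃))·u`. -/
theorem hei_lower_bound (ν : ℝ) (hν : 2 < ν)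
    (u s σt S : ℝ) (hu : 0 ≤ u) (hs : 0 < s) (hσt : 0 < σt) (hS : 0 ≤ S) :
    σt * tau ν (-S / σt) / (S + σt * tau ν (-S / σt)) * u ≤
      σt * s * tau ν ((u - S * s) / (σt * s)) ∧
    tau ν (-S / σt) / tau ν (S / σt) * u ≤
      σt * tau ν (-S / σt) / (S + σt * tau ν (-S / σt)) * u := by
  refine ⟨div_mul_le_mul_apply_of_monotone (tau_monotone hν) (tau_nonneg hν) (le_tau hν)
    hu hs hσt hS, le_of_eq ?_⟩
  rw [tau_eq_add_tau_neg hν (S / σt), ← neg_div, div_add' _ _ _ hσt.ne', div_div_eq_mul_div]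
  ring
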